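/- arXiv:2504.03914 — 5 statements merged into one kernel-verified Lean document; each statement's English description precedes it below -/
import Mathlib

section
/- Let a_0,...,a_{N-1} > 0 and consider minimizing V(Q) = ∑_{j=0}^{N-1} ((1−Q_j)/Q_j)·a_j² over monotone survival probabilities 1 ≥ Q_0 ≥ Q_1 ≥ ... ≥ Q_{N-1} > 0 subject to ∑_j Q_j = C. If the a_j are strictly decreasing, then the optimal solution is Q_j = min(1, C·a_j/∑_k a_k') for the appropriate normalization; in the interior case (no Q_j hitting 1), the optimum is Q_j = C·a_j/∑_{k=0}^{N-1} a_k, with optimal value (1/C)(∑_j a_j)² − ∑_j a_j². -/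
theorem sequential_variance_minimization_optimal
    (N : ℕ) (hN : 0 < N) (a : Fin N → ℝ)
    (hpos : ∀ j, 0 < a j)
    (hdec : ∀ j k : Fin N, j < k → a k < a j)
    (C : ℝ) (hC0 : 0 < C)
    (Qstar : Fin N → ℝ) (hQstar : ∀ j, Qstar j = C * a j / ∑ k, a k)
    (hint : ∀ j, Qstar j ≤ 1) :
    (∀ Q : Fin N → ℝ, (∀ j, 0 < Q j ∧ Q j ≤ 1) →
        (∀ j k : Fin N, j ≤ k → Q k ≤ Q j) → (∑ j, Q j = C) →
        (∑ j, ((1 - Qstar j) / Qstar j) * (a j) ^ 2)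
          ≤ ∑ j, ((1 - Q j) / Q j) * (a j) ^ 2) ∧
    (∑ j, ((1 - Qstar j) / Qstar j) * (a j) ^ 2)
        = (1 / C) * (∑ j, a j) ^ 2 - ∑ j, (a j) ^ 2 := by
  have hS : 0 < ∑ k, a k := Finset.sum_pos (fun i _ => hpos i) ⟨⟨0, hN⟩, Finset.mem_univ _⟩
  have hQs : ∀ j, 0 < Qstar j := fun j => by
    rw [hQstar j]; exact div_pos (mul_pos hC0 (hpos j)) hS
  have key : ∀ Q : Fin N → ℝ, (∀ j, 0 < Q j) →
      (∑ j, ((1 - Q j) / Q j) * (a j) ^ 2)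
        = (∑ j, (a j) ^ 2 / Q j) - ∑ j, (a j) ^ 2 := by
    intro Q hQ
    rw [← Finset.sum_sub_distrib]
    refine Finset.sum_congr rfl fun j _ => ?_
    rw [sub_div, div_self (hQ j).ne']
    ring
  have hval : (∑ j, ((1 - Qstar j) / Qstar j) * (a j) ^ 2)
      = (1 / C) * (∑ j, a j) ^ 2 - ∑ j, (a j) ^ 2 := by
    rw [key Qstar hQs]
    congr 1
    have h : ∀ j : Fin N, a j ^ 2 / Qstar j = a j * (∑ k, a k) / C := fun j => by
      rw [hQstar j]
      rw [div_div_eq_mul_div, sq]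
      rw [div_eq_div_iff (mul_pos hC0 (hpos j)).ne' hC0.ne']
      ring
    rw [Finset.sum_congr rfl fun j _ => h j, ← Finset.sum_div, ← Finset.sum_mul]
    field_simp
  refine ⟨fun Q hQ hmono hsum => ?_, hval⟩
  rw [key Q (fun j => (hQ j).1), hval]
  have := Finset.sq_sum_div_le_sum_sq_div Finset.univ a (g := Q) (fun i _ => (hQ i).1)
  rw [hsum] at this
  have h1 : (1 : ℝ) / C * (∑ j, a j) ^ 2 = (∑ j, a j) ^ 2 / C := by ring
  rw [h1]
  linarith
end

section
/- (Pooling lemma) Let a, b > 0 with a < b (two consecutive improvements violating diminishing returns). Over survival probabilities 1 ≥ Q_1 ≥ Q_2 > 0 with Q_1 + Q_2 = c fixed (0 < c ≤ 2), the function f(Q_1,Q_2) = (1/Q_1 − 1)a² + (1/Q_2 − 1)b² restricted to Q_1 ≥ Q_2 is minimized at Q_1 = Q_2 = c/2, i.e., when diminishing returns fails, the optimal constrained survival probabilities are equal on the violating block. -/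
theorem pooling_lemma
    (a b : ℝ) (ha : 0 < a) (hab : a < b)
    (c : ℝ) (hc0 : 0 < c) (hc2 : c ≤ 2) :
    ∀ Q₁ Q₂ : ℝ, 0 < Q₂ → Q₂ ≤ Q₁ → Q₁ ≤ 1 → Q₁ + Q₂ = c →
      (1 / (c / 2) - 1) * a ^ 2 + (1 / (c / 2) - 1) * b ^ 2
        ≤ (1 / Q₁ - 1) * a ^ 2 + (1 / Q₂ - 1) * b ^ 2 := by
  intro Q₁ Q₂ h2 h21 h1 hsum
  have h1pos : 0 < Q₁ := lt_of_lt_of_le h2 h21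
  rw [← sub_nonneg]
  have key : (1 / Q₁ - 1) * a ^ 2 + (1 / Q₂ - 1) * b ^ 2 -
      ((1 / (c / 2) - 1) * a ^ 2 + (1 / (c / 2) - 1) * b ^ 2)
      = ((Q₁ - Q₂) * (Q₁ * b ^ 2 - Q₂ * a ^ 2)) / (Q₁ * Q₂ * c) := by
    subst hsum
    field_simp
    ring
  rw [key]
  apply div_nonneg _ (by positivity)
  have hb : a ^ 2 ≤ b ^ 2 := by nlinarith
  have h3 : Q₂ * a ^ 2 ≤ Q₁ * b ^ 2 := by nlinarith
  exact mul_nonneg (sub_nonneg.2 h21) (sub_nonneg.2 h3)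
end

section
/- Suppose probabilities P(0),...,P(N) ≥ 0 sum to 1 and satisfy the stationarity condition a_j/(1 − ∑_{i=0}^j P(i)) = s for all n+1 ≤ j ≤ N−1 and some constant s > 0, where a_j > 0, P(j) = 0 for j ≤ n, and P(n+1) = 1 − a_{n+1}/s. Then for n+1 < j ≤ N−1, P(j) = (a_{j-1} − a_j)/s, and P(N) = a_{N-1}/s. -/
/-! Stationarity pins down every tail mass `1 - ∑_{i ≤ j} P i` as `a j / s`. Each `P j` with
`n + 1 < j < N` is the difference of two consecutive tails, and `P N` is the last tail, since
the masses sum to one. -/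

theorem eq_div_of_div_eq_of_ne_zero {K : Type*} [Field K] {a b c : K}
    (h : a / b = c) (hc : c ≠ 0) : b = a / c := by
  have hb : b ≠ 0 := by
    rintro rfl
    exact hc (by rw [← h, div_zero])
  rw [eq_div_iff hc, ← h, mul_div_cancel₀ a hb]

theorem AS_probabilities_from_stationarity_general
    (N n : ℕ) (hn : n + 2 ≤ N)
    (a : ℕ → ℝ)
    (P : ℕ → ℝ)
    (hsum : ∑ j ∈ Finset.range (N + 1), P j = 1)
    (s : ℝ) (hs : 0 < s)
    (hstat : ∀ j, n + 1 ≤ j → j ≤ N - 1 →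
      a j / (1 - ∑ i ∈ Finset.range (j + 1), P i) = s) :
    (∀ j, n + 1 < j → j ≤ N - 1 → P j = (a (j - 1) - a j) / s) ∧
    P N = a (N - 1) / s := by
  have tail (j : ℕ) (h₁ : n + 1 ≤ j) (h₂ : j ≤ N - 1) :
      1 - ∑ i ∈ Finset.range (j + 1), P i = a j / s :=
    eq_div_of_div_eq_of_ne_zero (hstat j h₁ h₂) hs.ne'
  constructor
  · intro j hj₁ hj₂
    obtain ⟨k, rfl⟩ : ∃ k, j = k + 1 := ⟨j - 1, by omega⟩
    have hk := tail k (by omega) (by omega)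
    have hk₁ := tail (k + 1) (by omega) hj₂
    rw [Finset.sum_range_succ _ (k + 1)] at hk₁
    rw [Nat.add_sub_cancel, sub_div]
    linarith
  · obtain ⟨M, rfl⟩ : ∃ M, N = M + 1 := ⟨N - 1, by omega⟩
    have hM := tail M (by omega) (by omega)
    rw [Finset.sum_range_succ _ (M + 1)] at hsum
    rw [Nat.add_sub_cancel]
    linarith

theorem AS_probabilities_from_stationarity
    (N n : ℕ) (hn : n + 2 ≤ N)
    (a : ℕ → ℝ) (hapos : ∀ j, j < N → 0 < a j)
    (P : ℕ → ℝ) (hPnonneg : ∀ j, j ≤ N → 0 ≤ P j)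
    (hsum : ∑ j ∈ Finset.range (N + 1), P j = 1)
    (s : ℝ) (hs : 0 < s)
    (hzero : ∀ j, j ≤ n → P j = 0)
    (hinit : P (n + 1) = 1 - a (n + 1) / s)
    (hstat : ∀ j, n + 1 ≤ j → j ≤ N - 1 →
      a j / (1 - ∑ i ∈ Finset.range (j + 1), P i) = s) :
    (∀ j, n + 1 < j → j ≤ N - 1 → P j = (a (j - 1) - a j) / s) ∧
    P N = a (N - 1) / s :=
  AS_probabilities_from_stationarity_general N n hn a P hsum s hs hstat
end

section
/- (Variance of Russian Roulette under A-orthogonality) In the setting of the unbiased Russian Roulette estimator with A-orthogonal directions p_j, the expected squared energy error satisfies E[‖x̂ − x*‖_A²] = ∑_{j=0}^{N-1} ((1 − Q(j))/Q(j))·α_j²‖p_j‖_A², where Q(j) = P(T > j). -/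
open MeasureTheory Matrix

/-!
Write `x̂ - x* = ∑ⱼ dⱼ • pⱼ` with `dⱼ = 1_{T > j} αⱼ / Q(j) - αⱼ`. By `A`-orthogonality the energy
norm of this combination is `∑ⱼ dⱼ² ‖pⱼ‖_A²`, so the expectation splits into one scalar Russian
Roulette error per direction, and `E[(1_S a / P(S) - a)²] = (1 - P(S)) / P(S) · a²`.
-/

theorem dotProduct_mulVec_sum_smul_self_of_pairwise {n ι R : Type*} [Fintype n] [CommSemiring R]
    (A : Matrix n n R) (s : Finset ι) (p : ι → n → R) (c : ι → R)
    (horth : (s : Set ι).Pairwise fun j k => A *ᵥ p j ⬝ᵥ p k = 0) :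
    (∑ j ∈ s, c j • p j) ⬝ᵥ A *ᵥ ∑ j ∈ s, c j • p j
      = ∑ j ∈ s, c j ^ 2 * (p j ⬝ᵥ A *ᵥ p j) := by
  simp only [mulVec_sum, mulVec_smul, sum_dotProduct, dotProduct_sum, smul_dotProduct,
    dotProduct_smul, smul_eq_mul]
  refine Finset.sum_congr rfl fun j hj => ?_
  rw [Finset.sum_eq_single_of_mem j hj fun k hk hkj => ?_]
  · ring
  · rw [dotProduct_comm, horth hj hk hkj.symm, mul_zero]

section RussianRoulette

variable {Ω : Type*}

theorem indicator_const_sub_sq (S : Set Ω) (c a : ℝ) :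
    (fun ω => (S.indicator (fun _ => c) ω - a) ^ 2)
      = S.indicator (fun _ => (c - a) ^ 2 - a ^ 2) + fun _ => a ^ 2 := by
  ext ω
  by_cases hω : ω ∈ S <;> simp [hω]

variable [MeasurableSpace Ω] {μ : Measure Ω} {S : Set Ω}

theorem integrable_indicator_const_sub_sq [IsFiniteMeasure μ] (hS : MeasurableSet S) (c a : ℝ) :
    Integrable (fun ω => (S.indicator (fun _ => c) ω - a) ^ 2) μ := by
  rw [indicator_const_sub_sq]
  exact ((integrable_const _).indicator hS).add (integrable_const _)

theorem integral_indicator_div_measureReal_sub_sq [IsProbabilityMeasure μ]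
    (hS : MeasurableSet S) (hS₀ : μ.real S ≠ 0) (a : ℝ) :
    ∫ ω, (S.indicator (fun _ => a / μ.real S) ω - a) ^ 2 ∂μ
      = (1 - μ.real S) / μ.real S * a ^ 2 := by
  rw [indicator_const_sub_sq, integral_add' ((integrable_const _).indicator hS)
    (integrable_const _), integral_indicator_const _ hS, integral_const, probReal_univ,
    smul_eq_mul, smul_eq_mul]
  field_simp
  ring

end RussianRoulette

theorem russian_roulette_variance_A_orthogonal_general
    {Ω : Type*} [MeasurableSpace Ω] (μ : Measure Ω) [IsProbabilityMeasure μ]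
    (M N : ℕ) (A : Matrix (Fin M) (Fin M) ℝ)
    (p : ℕ → (Fin M → ℝ))
    (horth : ∀ j k, j < N → k < N → j ≠ k → (A.mulVec (p j)) ⬝ᵥ p k = 0)
    (α : ℕ → ℝ) (x0 xstar : Fin M → ℝ)
    (hxstar : xstar = x0 + ∑ j ∈ Finset.range N, α j • p j)
    (T : Ω → ℕ) (hT : Measurable T)
    (Q : ℕ → ℝ) (hQ : ∀ j, Q j = (μ {ω | j < T ω}).toReal)
    (hQpos : ∀ j, j < N → 0 < Q j)
    (xhat : Ω → (Fin M → ℝ))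
    (hxhat : ∀ ω, xhat ω = x0 + ∑ j ∈ Finset.range N,
        if j < T ω then (α j / Q j) • p j else 0) :
    ∫ ω, (xhat ω - xstar) ⬝ᵥ A.mulVec (xhat ω - xstar) ∂μ
      = ∑ j ∈ Finset.range N,
          ((1 - Q j) / Q j) * (α j) ^ 2 * (p j ⬝ᵥ A.mulVec (p j)) := by
  set S : ℕ → Set Ω := fun j => {ω | j < T ω}
  have hS : ∀ j, MeasurableSet (S j) := fun j => hT measurableSet_Ioi
  have hQS : ∀ j, Q j = μ.real (S j) := hQ
  have hdiff : ∀ ω, xhat ω - xstar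
      = ∑ j ∈ Finset.range N, ((S j).indicator (fun _ => α j / Q j) ω - α j) • p j := by
    intro ω
    simp only [hxhat, hxstar, add_sub_add_left_eq_sub, ← Finset.sum_sub_distrib, sub_smul]
    refine Finset.sum_congr rfl fun j _ => ?_
    by_cases hj : j < T ω <;> simp [S, hj]
  have hpairwise : ((Finset.range N : Finset ℕ) : Set ℕ).Pairwise
      fun j k => A *ᵥ p j ⬝ᵥ p k = 0 := fun j hj k hk hjk =>
    horth j k (Finset.mem_range.mp hj) (Finset.mem_range.mp hk) hjk
  simp_rw [hdiff, dotProduct_mulVec_sum_smul_self_of_pairwise A _ p _ hpairwise]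
  rw [integral_finsetSum _ fun j _ =>
    (integrable_indicator_const_sub_sq (hS j) _ _).mul_const _]
  refine Finset.sum_congr rfl fun j hj => ?_
  rw [integral_mul_const, hQS, integral_indicator_div_measureReal_sub_sq (hS j)
    (hQS j ▸ (hQpos j (Finset.mem_range.mp hj)).ne')]

theorem russian_roulette_variance_A_orthogonal
    {Ω : Type*} [MeasurableSpace Ω] (μ : Measure Ω) [IsProbabilityMeasure μ]
    (M N : ℕ) (A : Matrix (Fin M) (Fin M) ℝ) (hA : A.PosDef)
    (p : ℕ → (Fin M → ℝ))
    (horth : ∀ j k, j < N → k < N → j ≠ k → (A.mulVec (p j)) ⬝ᵥ p k = 0)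
    (α : ℕ → ℝ) (x0 xstar : Fin M → ℝ)
    (hxstar : xstar = x0 + ∑ j ∈ Finset.range N, α j • p j)
    (T : Ω → ℕ) (hT : Measurable T)
    (Q : ℕ → ℝ) (hQ : ∀ j, Q j = (μ {ω | j < T ω}).toReal)
    (hQpos : ∀ j, j < N → 0 < Q j)
    (xhat : Ω → (Fin M → ℝ))
    (hxhat : ∀ ω, xhat ω = x0 + ∑ j ∈ Finset.range N,
        if j < T ω then (α j / Q j) • p j else 0) :
    ∫ ω, (xhat ω - xstar) ⬝ᵥ A.mulVec (xhat ω - xstar) ∂μ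
      = ∑ j ∈ Finset.range N,
          ((1 - Q j) / Q j) * (α j) ^ 2 * (p j ⬝ᵥ A.mulVec (p j)) :=
  russian_roulette_variance_A_orthogonal_general μ M N A p horth α x0 xstar hxstar T hT Q hQ hQpos
    xhat hxhat
end

section
/- Let a > 0 and b > 0 with a² and b² the squared improvements of two consecutive iterations, and suppose a² < b² (diminishing returns fails). For the two-step Russian Roulette estimator with survival probabilities Q_1 ≥ Q_2 and fixed budget Q_1 + Q_2 = c, the equal-probability solution Q_1 = Q_2 = c/2 attains variance (2/c − 1)(a² + b²), which is strictly less than the variance ((1/Q_1 − 1)a² + (1/Q_2 − 1)b²) at any feasible point with Q_1 > Q_2. -/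
theorem pooling_strict_improvement
    (a b : ℝ) (ha : 0 < a) (hb : 0 < b) (hab : a ^ 2 < b ^ 2)
    (c : ℝ) (hc0 : 0 < c) (hc2 : c < 2) :
    ((1 / (c / 2) - 1) * a ^ 2 + (1 / (c / 2) - 1) * b ^ 2
        = (2 / c - 1) * (a ^ 2 + b ^ 2)) ∧
    (∀ Q₁ Q₂ : ℝ, 0 < Q₂ → Q₂ < Q₁ → Q₁ ≤ 1 → Q₁ + Q₂ = c →
      (2 / c - 1) * (a ^ 2 + b ^ 2)
        < (1 / Q₁ - 1) * a ^ 2 + (1 / Q₂ - 1) * b ^ 2) := by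
  constructor
  · field_simp
  · intro Q₁ Q₂ h2 h12 h1 hsum
    have h1' : 0 < Q₁ := h2.trans h12
    rw [← sub_pos]
    have key : (1 / Q₁ - 1) * a ^ 2 + (1 / Q₂ - 1) * b ^ 2
        - (2 / c - 1) * (a ^ 2 + b ^ 2)
        = (Q₁ - Q₂) * (b ^ 2 * Q₁ - a ^ 2 * Q₂) / (c * Q₁ * Q₂) := by
      subst hsum
      field_simp
      ring
    rw [key]
    apply div_pos
    · have : a ^ 2 * Q₂ < b ^ 2 * Q₁ := by nlinarith
      nlinarith
    · positivity
end
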